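/- arXiv:2304.10932 — 2 statements merged into one kernel-verified Lean document; each statement's English description precedes it below -/
import Mathlib

section
/- Under the hypotheses of the previous statement, the derivative of the implicit function g with respect to the j-th coordinate at the base point (ψ̄_k)_{k∈𝒥} equals η_j = σ_j^p (b_j(ψ̄ - ψ̄_j))^{p-1} / Σ_{k∈𝒥} σ_k^p (b_k(ψ̄ - ψ̄_k))^{p-1}, with p - 1 = -0.46. -/
/-!
Differentiate the identity `∑ₖ bₖ σₖᵖ (bₖ (g ψ_J - ψₖ))ᵖ = c`, valid on the open set `U`, at the
base point in the direction `e_j`. Writing `aₖ = σₖᵖ (bₖ (ψ̄ - ψ̄ₖ))ᵖ⁻¹ > 0` and `D = ∂ⱼ g`, the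
chain rule (with `bₖ² = 1`) gives `p ∑ₖ aₖ (D - δₖⱼ) = 0`, i.e. `D = aⱼ / ∑ₖ aₖ`.
-/

open Finset Filter Topology

section ImplicitSum

variable {J : Type*} [Fintype J] {φ : J → ℝ → ℝ} {d : J → ℝ} {g : (J → ℝ) → ℝ} {x : J → ℝ}

theorem hasFDerivAt_sum_comp_sub (hφ : ∀ k, HasDerivAt (φ k) (d k) (g x - x k))
    (hg : DifferentiableAt ℝ g x) :
    HasFDerivAt (fun y => ∑ k, φ k (g y - y k))
      (∑ k, d k • (fderiv ℝ g x - ContinuousLinearMap.proj k)) x :=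
  HasFDerivAt.fun_sum fun k _ =>
    (hφ k).comp_hasFDerivAt x (hg.hasFDerivAt.sub (hasFDerivAt_apply k x))

theorem fderiv_apply_single_of_sum_comp_sub_eventuallyEq [DecidableEq J] {c : ℝ}
    (hφ : ∀ k, HasDerivAt (φ k) (d k) (g x - x k)) (hg : DifferentiableAt ℝ g x)
    (hconst : ∀ᶠ y in 𝓝 x, ∑ k, φ k (g y - y k) = c) (hd : ∑ k, d k ≠ 0) (j : J) :
    fderiv ℝ g x (Pi.single j 1) = d j / ∑ k, d k := by
  have hzero : ∑ k, d k • (fderiv ℝ g x - ContinuousLinearMap.proj k) = 0 :=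
    (hasFDerivAt_sum_comp_sub hφ hg).unique
      ((hasFDerivAt_const c x).congr_of_eventuallyEq hconst)
  have hj := congrArg (fun L : (J → ℝ) →L[ℝ] ℝ => L (Pi.single j 1)) hzero
  simp only [_root_.sum_apply, smul_apply, sub_apply, ContinuousLinearMap.proj_apply,
    zero_apply, smul_eq_mul, mul_sub, sum_sub_distrib, Pi.single_apply, mul_ite, mul_one,
    mul_zero, sum_ite_eq', mem_univ, if_true, ← sum_mul] at hj
  rw [eq_div_iff hd, mul_comm]
  linarith

end ImplicitSum

theorem hasDerivAt_mul_mul_rpow_of_mul_self_eq_one {b s p t : ℝ} (hb : b * b = 1)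
    (ht : 0 < b * t) :
    HasDerivAt (fun u => b * s * (b * u) ^ p) (p * (s * (b * t) ^ (p - 1))) t := by
  refine ((((hasDerivAt_id' t).const_mul b).rpow_const (p := p) (Or.inl ht.ne')).const_mul
    (b * s)).congr_deriv ?_
  linear_combination p * s * (b * t) ^ (p - 1) * hb

theorem stmt_5 (J : Type) [Fintype J] [Nonempty J] [DecidableEq J]
    (σ b : J → ℝ) (hσ : ∀ j, 0 < σ j) (hb : ∀ j, b j = 1 ∨ b j = -1) (c : ℝ)
    (ψbar : ℝ) (ψbarJ : J → ℝ) (hpos : ∀ j, 0 < b j * (ψbar - ψbarJ j))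
    (U : Set (J → ℝ)) (hU : IsOpen U) (hmem : ψbarJ ∈ U)
    (g : (J → ℝ) → ℝ) (hg : DifferentiableAt ℝ g ψbarJ) (hgbase : g ψbarJ = ψbar)
    (himp : ∀ ψJ ∈ U,
      ∑ j, b j * (σ j) ^ (0.54 : ℝ) * (b j * (g ψJ - ψJ j)) ^ (0.54 : ℝ) = c) (j : J) :
    fderiv ℝ g ψbarJ (Pi.single j 1) =
      (σ j) ^ (0.54 : ℝ) * (b j * (ψbar - ψbarJ j)) ^ ((0.54 : ℝ) - 1) /
        ∑ k, (σ k) ^ (0.54 : ℝ) * (b k * (ψbar - ψbarJ k)) ^ ((0.54 : ℝ) - 1) := by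
  subst hgbase
  set a : J → ℝ := fun k => σ k ^ (0.54 : ℝ) * (b k * (g ψbarJ - ψbarJ k)) ^ ((0.54 : ℝ) - 1)
  have ha : ∀ k, 0 < a k := fun k =>
    mul_pos (Real.rpow_pos_of_pos (hσ k) _) (Real.rpow_pos_of_pos (hpos k) _)
  have hφ : ∀ k, HasDerivAt (fun t => b k * σ k ^ (0.54 : ℝ) * (b k * t) ^ (0.54 : ℝ))
      ((0.54 : ℝ) * a k) (g ψbarJ - ψbarJ k) := fun k =>
    hasDerivAt_mul_mul_rpow_of_mul_self_eq_one (by rcases hb k with h | h <;> simp [h])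
      (hpos k)
  have hsum : ∑ k, (0.54 : ℝ) * a k ≠ 0 := by
    rw [← mul_sum]
    exact mul_ne_zero (by norm_num) (sum_pos (fun k _ => ha k) univ_nonempty).ne'
  rw [fderiv_apply_single_of_sum_comp_sub_eventuallyEq hφ hg
    (eventually_of_mem (hU.mem_nhds hmem) himp) hsum, ← mul_sum,
    mul_div_mul_left _ _ (by norm_num)]
end

section
/- Let p = 0.54, 𝒥 finite nonempty, σ_j > 0, b_j ∈ {-1,1}, and base points ψ̄, (ψ̄_j)_{j∈𝒥} with b_j(ψ̄ - ψ̄_j) > 0 satisfying the balance equation Σ_j b_j σ_j^p (b_j(ψ̄ - ψ̄_j))^p = c. Define the linearization T(ψ_J) = ψ̄ + Σ_j η_j (ψ_j - ψ̄_j) with η_j the normalized weights from Proposition 1. Then T is the first-order Taylor polynomial of the implicit function g at (ψ̄_j)_{j∈𝒥}: g((ψ̄_j)) = T((ψ̄_j)) and Dg((ψ̄_j)) = DT, and hence g(ψ_J) - T(ψ_J) = o(‖ψ_J - ψ̄_J‖) as ψ_J → ψ̄_J. -/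
open Finset Asymptotics

/-! Differentiating the node balance `∑ j, φ j (g ψ - ψ j) = c` along the implicit head `g` gives
`∑ j, φ' j • (Dg - proj j) = 0`, so `Dg` is the `φ'`-weighted average of the coordinate projections.
For the Hazen–Williams terms `φ j t = b j σ j ^ p (b j t) ^ p` the sign cancels (`b j ^ 2 = 1`) and
`φ' j = p σ j ^ p (b j t) ^ (p - 1)`, whose normalization is `η j`. Hence `T`, the affine map through
`(ψ̄_J, ψ̄)` with slope `∑ j, η j • proj j`, has the value and derivative of `g` at `ψ̄_J`. -/

theorem eq_sum_div_smul_of_sum_smul_sub_eq_zero {ι K V : Type*} [Field K] [AddCommGroup V]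
    [Module K V] (s : Finset ι) (w : ι → K) (x : V) (y : ι → V)
    (h : ∑ i ∈ s, w i • (x - y i) = 0) (hw : ∑ i ∈ s, w i ≠ 0) :
    x = ∑ i ∈ s, (w i / ∑ k ∈ s, w k) • y i := by
  simp only [smul_sub, sum_sub_distrib, ← sum_smul, sub_eq_zero] at h
  simp_rw [div_eq_inv_mul, mul_smul, ← smul_sum, ← h, inv_smul_smul₀ hw]

theorem HasFDerivAt.eq_sum_div_smul_proj_of_eventually_sum_comp_sub_eq {J : Type*} [Fintype J]
    {φ : J → ℝ → ℝ} {φ' : J → ℝ} {g : (J → ℝ) → ℝ} {D : (J → ℝ) →L[ℝ] ℝ} {a : J → ℝ} {c : ℝ}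
    (hg : HasFDerivAt g D a) (hφ : ∀ j, HasDerivAt (φ j) (φ' j) (g a - a j))
    (hφ' : ∑ j, φ' j ≠ 0) (hbal : ∀ᶠ ψ in nhds a, ∑ j, φ j (g ψ - ψ j) = c) :
    D = ∑ j, (φ' j / ∑ k, φ' k) • ContinuousLinearMap.proj j := by
  have hderiv : HasFDerivAt (fun ψ => ∑ j, φ j (g ψ - ψ j))
      (∑ j, φ' j • (D - ContinuousLinearMap.proj j)) a :=
    HasFDerivAt.fun_sum fun j _ =>
      (hφ j).comp_hasFDerivAt a (hg.sub (hasFDerivAt_apply j a))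
  have hzero : ∑ j, φ' j • (D - ContinuousLinearMap.proj j) = 0 :=
    hderiv.unique ((hasFDerivAt_const c a).congr_of_eventuallyEq hbal)
  exact eq_sum_div_smul_of_sum_smul_sub_eq_zero _ _ _ _ hzero hφ'

theorem hasDerivAt_signed_rpow {b s p t : ℝ} (hb : b = 1 ∨ b = -1) (ht : 0 < b * t) :
    HasDerivAt (fun t => b * s ^ p * (b * t) ^ p) (p * (s ^ p * (b * t) ^ (p - 1))) t := by
  have hbb : b * b = 1 := by rcases hb with rfl | rfl <;> norm_num
  refine ((((hasDerivAt_id' t).const_mul b).rpow_const (Or.inl ht.ne')).const_mul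
    (b * s ^ p)).congr_deriv ?_
  linear_combination (p * s ^ p * (b * t) ^ (p - 1)) * hbb

theorem stmt_16_general (J : Type) [Fintype J] [Nonempty J]
    (σ b : J → ℝ) (hσ : ∀ j, 0 < σ j) (hb : ∀ j, b j = 1 ∨ b j = -1) (c : ℝ)
    (ψbar : ℝ) (ψbarJ : J → ℝ) (hpos : ∀ j, 0 < b j * (ψbar - ψbarJ j))
    (U : Set (J → ℝ)) (hU : IsOpen U) (hmem : ψbarJ ∈ U)
    (g : (J → ℝ) → ℝ) (hg : DifferentiableAt ℝ g ψbarJ) (hgbase : g ψbarJ = ψbar)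
    (himp : ∀ ψJ ∈ U,
      ∑ j, b j * (σ j) ^ (0.54 : ℝ) * (b j * (g ψJ - ψJ j)) ^ (0.54 : ℝ) = c)
    (η : J → ℝ)
    (hη : ∀ j, η j = (σ j) ^ (0.54 : ℝ) * (b j * (ψbar - ψbarJ j)) ^ ((0.54 : ℝ) - 1) /
      ∑ k, (σ k) ^ (0.54 : ℝ) * (b k * (ψbar - ψbarJ k)) ^ ((0.54 : ℝ) - 1))
    (T : (J → ℝ) → ℝ)
    (hT : ∀ ψJ, T ψJ = ψbar + ∑ j, η j * (ψJ j - ψbarJ j)) :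
    g ψbarJ = T ψbarJ ∧
    fderiv ℝ g ψbarJ = fderiv ℝ T ψbarJ ∧
    (fun ψJ => g ψJ - T ψJ) =o[nhds ψbarJ] fun ψJ => ψJ - ψbarJ := by
  set p : ℝ := 0.54
  set w : J → ℝ := fun j => σ j ^ p * (b j * (ψbar - ψbarJ j)) ^ (p - 1)
  have hw : 0 < ∑ j, w j := sum_pos (fun j _ => mul_pos (Real.rpow_pos_of_pos (hσ j) p)
    (Real.rpow_pos_of_pos (hpos j) (p - 1))) univ_nonempty
  have hp : p ≠ 0 := by norm_num
  have hpw : ∑ j, p * w j ≠ 0 := by rw [← mul_sum]; exact mul_ne_zero hp hw.ne'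
  set L : (J → ℝ) →L[ℝ] ℝ := ∑ j, η j • ContinuousLinearMap.proj j
  have hTL : T = fun ψ => ψbar + L (ψ - ψbarJ) := funext fun ψ => by simp [hT, L]
  have hgL : HasFDerivAt g L ψbarJ := by
    convert hg.hasFDerivAt using 1
    rw [hg.hasFDerivAt.eq_sum_div_smul_proj_of_eventually_sum_comp_sub_eq
      (φ := fun j t => b j * σ j ^ p * (b j * t) ^ p) (φ' := fun j => p * w j) (fun j => by rw [hgbase]; exact hasDerivAt_signed_rpow (hb j) (hpos j)) hpw
      (Filter.eventually_of_mem (hU.mem_nhds hmem) himp)]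
    simp only [← mul_sum, mul_div_mul_left _ _ hp, hη, L, w]
  refine ⟨by simp [hTL, hgbase], ?_, ?_⟩
  · rw [hgL.fderiv, hTL]
    exact ((L.hasFDerivAt.comp ψbarJ (hasFDerivAt_sub_const ψbarJ)).const_add ψbar).fderiv.symm
  · simpa [hTL, hgbase, sub_sub] using hgL.isLittleO

theorem stmt_16 (J : Type) [Fintype J] [Nonempty J] [DecidableEq J]
    (σ b : J → ℝ) (hσ : ∀ j, 0 < σ j) (hb : ∀ j, b j = 1 ∨ b j = -1) (c : ℝ)
    (ψbar : ℝ) (ψbarJ : J → ℝ) (hpos : ∀ j, 0 < b j * (ψbar - ψbarJ j))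
    (hbal : ∑ j, b j * (σ j) ^ (0.54 : ℝ) * (b j * (ψbar - ψbarJ j)) ^ (0.54 : ℝ) = c)
    (U : Set (J → ℝ)) (hU : IsOpen U) (hmem : ψbarJ ∈ U)
    (g : (J → ℝ) → ℝ) (hg : DifferentiableAt ℝ g ψbarJ) (hgbase : g ψbarJ = ψbar)
    (himp : ∀ ψJ ∈ U,
      ∑ j, b j * (σ j) ^ (0.54 : ℝ) * (b j * (g ψJ - ψJ j)) ^ (0.54 : ℝ) = c)
    (η : J → ℝ)
    (hη : ∀ j, η j = (σ j) ^ (0.54 : ℝ) * (b j * (ψbar - ψbarJ j)) ^ ((0.54 : ℝ) - 1) /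
      ∑ k, (σ k) ^ (0.54 : ℝ) * (b k * (ψbar - ψbarJ k)) ^ ((0.54 : ℝ) - 1))
    (T : (J → ℝ) → ℝ)
    (hT : ∀ ψJ, T ψJ = ψbar + ∑ j, η j * (ψJ j - ψbarJ j)) :
    g ψbarJ = T ψbarJ ∧
    fderiv ℝ g ψbarJ = fderiv ℝ T ψbarJ ∧
    (fun ψJ => g ψJ - T ψJ) =o[nhds ψbarJ] fun ψJ => ψJ - ψbarJ :=
  stmt_16_general J σ b hσ hb c ψbar ψbarJ hpos U hU hmem g hg hgbase himp η hη T hT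
end
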